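/- Let A be a nonempty line arrangement in ℝ² with |A| = n lines, and set ν_f(A) = min{n − m(A) + 1, n − p(A)}. Then there exists a nonzero polynomial vector field of degree ν_f(A) that fixes every line of A and whose set of invariant lines is infinite (i.e., for d ≥ ν_f(A), the set D^∞(A) of vector fields fixing A and fixing infinitely many lines is nonempty). -/
import Mathlib


open MvPolynomial

/-- Evaluation of a bivariate polynomial at a point of `ℝ × ℝ`
(the variable `X 0` is `x`, the variable `X 1` is `y`). -/
noncomputable def pev (P : MvPolynomial (Fin 2) ℝ) (q : ℝ × ℝ) : ℝ :=
  MvPolynomial.eval ![q.1, q.2] P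

/-- The line `{(x, y) | a * x + b * y + c = 0}`. -/
def lineSet (a b c : ℝ) : Set (ℝ × ℝ) := {q : ℝ × ℝ | a * q.1 + b * q.2 + c = 0}

/-- A subset of `ℝ²` is a line if it is the zero set of an affine form
`a * x + b * y + c` with `(a, b) ≠ (0, 0)`. -/
def IsLine (L : Set (ℝ × ℝ)) : Prop :=
  ∃ a b c : ℝ, (a, b) ≠ (0, 0) ∧ L = lineSet a b c

/-- The line `L` is invariant by the polynomial vector field `χ = P ∂x + Q ∂y`:
for a defining affine form `a * x + b * y + c` of `L`, the polynomial
`a * P + b * Q` vanishes at every point of `L`. -/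
def InvLine (P Q : MvPolynomial (Fin 2) ℝ) (L : Set (ℝ × ℝ)) : Prop :=
  ∃ a b c : ℝ, (a, b) ≠ (0, 0) ∧ L = lineSet a b c ∧
    ∀ q ∈ L, a * pev P q + b * pev Q q = 0

open scoped Classical in
/-- The number of lines of the arrangement `A` passing through the point `q`. -/
noncomputable def numThrough (A : Finset (Set (ℝ × ℝ))) (q : ℝ × ℝ) : ℕ :=
  (A.filter (fun L => q ∈ L)).card

/-- `mArr A` is the maximal number of lines of `A` passing through a common point. -/
noncomputable def mArr (A : Finset (Set (ℝ × ℝ))) : ℕ :=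
  sSup (Set.range (numThrough A))

/-- Two lines are parallel if they are equal or disjoint. -/
def ParLines (L L' : Set (ℝ × ℝ)) : Prop := L = L' ∨ L ∩ L' = ∅

/-- `pArr A` is the maximal number of pairwise parallel lines in `A`. -/
noncomputable def pArr (A : Finset (Set (ℝ × ℝ))) : ℕ :=
  sSup {k : ℕ | ∃ S : Finset (Set (ℝ × ℝ)), S ⊆ A ∧
    (∀ L ∈ S, ∀ L' ∈ S, ParLines L L') ∧ S.card = k}

-- auxiliary ---------------------------------------------------------------

open scoped Classical in
/-- choice of coefficients for a line -/
noncomputable def lco (L : Set (ℝ × ℝ)) : ℝ × ℝ × ℝ :=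
  if h : IsLine L then ⟨h.choose, h.choose_spec.choose, h.choose_spec.choose_spec.choose⟩
  else (1, 0, 0)

lemma lco_spec {L : Set (ℝ × ℝ)} (h : IsLine L) :
    ((lco L).1, (lco L).2.1) ≠ ((0 : ℝ), (0 : ℝ)) ∧
      L = lineSet (lco L).1 (lco L).2.1 (lco L).2.2 := by
  rw [lco, dif_pos h]
  exact ⟨h.choose_spec.choose_spec.choose_spec.1, h.choose_spec.choose_spec.choose_spec.2⟩

/-- the affine form as a polynomial -/
noncomputable def lform (a b c : ℝ) : MvPolynomial (Fin 2) ℝ := C a * X 0 + C b * X 1 + C c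

@[simp] lemma pev_lform (a b c : ℝ) (q : ℝ × ℝ) :
    pev (lform a b c) q = a * q.1 + b * q.2 + c := by
  simp [pev, lform]

@[simp] lemma pev_mul (P Q : MvPolynomial (Fin 2) ℝ) (q : ℝ × ℝ) :
    pev (P * Q) q = pev P q * pev Q q := by simp [pev]

@[simp] lemma pev_C (a : ℝ) (q : ℝ × ℝ) : pev (C a) q = a := by simp [pev]

@[simp] lemma pev_X0 (q : ℝ × ℝ) : pev (X 0) q = q.1 := by simp [pev]

@[simp] lemma pev_X1 (q : ℝ × ℝ) : pev (X 1) q = q.2 := by simp [pev]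

lemma pev_prod {ι : Type*} (s : Finset ι) (f : ι → MvPolynomial (Fin 2) ℝ) (q : ℝ × ℝ) :
    pev (∏ i ∈ s, f i) q = ∏ i ∈ s, pev (f i) q := by simp [pev]

lemma sq_add_sq_ne {a b : ℝ} (h : (a, b) ≠ ((0:ℝ), (0:ℝ))) : a^2 + b^2 ≠ 0 := by
  have h' : ¬ (a = 0 ∧ b = 0) := by simpa [Prod.ext_iff] using h
  rcases not_and_or.mp h' with ha | hb
  · positivity
  · positivity

lemma lform_ne_zero {a b : ℝ} (c : ℝ) (h : (a, b) ≠ ((0:ℝ), (0:ℝ))) : lform a b c ≠ 0 := by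
  intro h0
  have h1 := pev_lform a b c (a, b)
  have h2 := pev_lform a b c (0, 0)
  rw [h0] at h1 h2
  simp [pev] at h1 h2
  exact sq_add_sq_ne h (by nlinarith [h1, h2])

lemma totalDegree_lform_le (a b c : ℝ) : (lform a b c).totalDegree ≤ 1 := by
  refine le_trans (totalDegree_add _ _) (max_le (le_trans (totalDegree_add _ _) (max_le ?_ ?_)) ?_)
  · exact le_trans (totalDegree_mul _ _) (by simp [totalDegree_X])
  · exact le_trans (totalDegree_mul _ _) (by simp [totalDegree_X])
  · simp

/-- specialization along the line `s ↦ (s, t*s)` -/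
noncomputable def phi (t : ℝ) : MvPolynomial (Fin 2) ℝ →ₐ[ℝ] Polynomial ℝ :=
  MvPolynomial.aeval ![Polynomial.X, Polynomial.C t * Polynomial.X]

lemma natDegree_phi_le (t : ℝ) (p : MvPolynomial (Fin 2) ℝ) :
    (phi t p).natDegree ≤ p.totalDegree := by
  conv_lhs => rw [p.as_sum]
  rw [map_sum]
  apply Polynomial.natDegree_sum_le_of_forall_le
  intro m hm
  rw [phi, MvPolynomial.aeval_monomial]
  refine le_trans (Polynomial.natDegree_mul_le) ?_
  have h1 : (algebraMap ℝ (Polynomial ℝ) (coeff m p)).natDegree = 0 := Polynomial.natDegree_C _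
  rw [h1, zero_add]
  rw [Finsupp.prod]
  refine le_trans (Polynomial.natDegree_prod_le _ _) ?_
  have key : ∀ i ∈ m.support,
      (![Polynomial.X, Polynomial.C t * Polynomial.X] i ^ m i).natDegree ≤ m i := by
    intro i _
    refine Polynomial.natDegree_pow_le.trans ?_
    have hle : (![Polynomial.X, Polynomial.C t * Polynomial.X] i).natDegree ≤ 1 := by
      fin_cases i
      · simp
      · simpa using le_trans (Polynomial.natDegree_mul_le)
          (by simp [Polynomial.natDegree_C])
    calc m i * (![Polynomial.X, Polynomial.C t * Polynomial.X] i).natDegree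
        ≤ m i * 1 := Nat.mul_le_mul_left _ hle
      _ = m i := Nat.mul_one _
  calc ∑ i ∈ m.support, (![Polynomial.X, Polynomial.C t * Polynomial.X] i ^ m i).natDegree
      ≤ ∑ i ∈ m.support, m i := Finset.sum_le_sum key
    _ = m.sum fun _ e => e := by simp [Finsupp.sum]
    _ ≤ p.totalDegree := MvPolynomial.le_totalDegree hm

lemma phi_lform (t a b c : ℝ) :
    phi t (lform a b c) = Polynomial.C (a + b * t) * Polynomial.X + Polynomial.C c := by
  simp [phi, lform]
  ring

lemma linear_ne_zero' {a : ℝ} (c : ℝ) (ha : a ≠ 0) :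
    Polynomial.C a * Polynomial.X + Polynomial.C c ≠ 0 := by
  intro h
  have := congrArg (fun p => Polynomial.coeff p 1) h
  simp at this
  exact ha this

-- line geometry

lemma lineSet_pt {a b c : ℝ} (h : (a, b) ≠ ((0:ℝ), (0:ℝ))) :
    (-(a*c)/(a^2+b^2), -(b*c)/(a^2+b^2)) ∈ lineSet a b c := by
  have hs := sq_add_sq_ne h
  simp only [lineSet, Set.mem_setOf_eq]
  field_simp
  ring

lemma lineSet_inj {a b : ℝ} (h : (a, b) ≠ ((0:ℝ), (0:ℝ))) {c c' : ℝ}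
    (he : lineSet a b c = lineSet a b c') : c = c' := by
  have h1 := lineSet_pt (c := c) h
  have h2 : (-(a*c)/(a^2+b^2), -(b*c)/(a^2+b^2)) ∈ lineSet a b c' := he ▸ h1
  simp only [lineSet, Set.mem_setOf_eq] at h1 h2
  linarith

lemma parallel_det {a b c a' b' c' : ℝ} (h : (a, b) ≠ ((0:ℝ),(0:ℝ)))
    (h' : (a', b') ≠ ((0:ℝ),(0:ℝ)))
    (hp : lineSet a b c = lineSet a' b' c' ∨ lineSet a b c ∩ lineSet a' b' c' = ∅) : a * b' = a' * b := by
  by_contra hd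
  have hΔ : a * b' - a' * b ≠ 0 := sub_ne_zero.mpr hd
  set Δ := a * b' - a' * b with hΔdef
  set x0 : ℝ := (b * c' - b' * c) / Δ
  set y0 : ℝ := (c * a' - c' * a) / Δ
  have hm1 : (x0, y0) ∈ lineSet a b c := by
    simp only [lineSet, Set.mem_setOf_eq, x0, y0]
    field_simp
    ring
  have hm2 : (x0, y0) ∈ lineSet a' b' c' := by
    simp only [lineSet, Set.mem_setOf_eq, x0, y0]
    field_simp
    ring
  rcases hp with he | hd2
  · -- equal lines: use two points of the first line
    have hm1' : (x0 + b, y0 - a) ∈ lineSet a b c := by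
      simp only [lineSet, Set.mem_setOf_eq] at hm1 ⊢
      nlinarith [hm1]
    have e1 : (x0, y0) ∈ lineSet a' b' c' := he ▸ hm1
    have e2 : (x0 + b, y0 - a) ∈ lineSet a' b' c' := he ▸ hm1'
    simp only [lineSet, Set.mem_setOf_eq] at e1 e2
    apply hd
    nlinarith [e1, e2]
  · have : (x0, y0) ∈ lineSet a b c ∩ lineSet a' b' c' := ⟨hm1, hm2⟩
    rw [hd2] at this
    exact this

-- product of the forms of a finite set of lines -----------------------------

noncomputable def Rpoly (T : Finset (Set (ℝ × ℝ))) : MvPolynomial (Fin 2) ℝ :=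
  ∏ L ∈ T, lform (lco L).1 (lco L).2.1 (lco L).2.2

lemma Rpoly_ne_zero {T : Finset (Set (ℝ × ℝ))} (h : ∀ L ∈ T, IsLine L) : Rpoly T ≠ 0 :=
  Finset.prod_ne_zero_iff.2 fun L hL => lform_ne_zero _ (lco_spec (h L hL)).1

lemma phi_Rpoly (T : Finset (Set (ℝ × ℝ))) (t : ℝ) :
    phi t (Rpoly T) = ∏ L ∈ T,
      (Polynomial.C ((lco L).1 + (lco L).2.1 * t) * Polynomial.X + Polynomial.C (lco L).2.2) := by
  rw [Rpoly, map_prod]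
  exact Finset.prod_congr rfl fun L _ => phi_lform t _ _ _

lemma natDegree_phi_Rpoly {T : Finset (Set (ℝ × ℝ))} {t : ℝ}
    (ht : ∀ L ∈ T, (lco L).1 + (lco L).2.1 * t ≠ 0) :
    (phi t (Rpoly T)).natDegree = T.card := by
  rw [phi_Rpoly, Polynomial.natDegree_prod _ _ (fun L hL => linear_ne_zero' _ (ht L hL))]
  rw [Finset.sum_congr rfl fun L hL => Polynomial.natDegree_linear (ht L hL)]
  simp

lemma phi_Rpoly_ne_zero {T : Finset (Set (ℝ × ℝ))} {t : ℝ}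
    (ht : ∀ L ∈ T, (lco L).1 + (lco L).2.1 * t ≠ 0) : phi t (Rpoly T) ≠ 0 := by
  rw [phi_Rpoly]
  exact Finset.prod_ne_zero_iff.2 fun L hL => linear_ne_zero' _ (ht L hL)

lemma totalDegree_Rpoly_le (T : Finset (Set (ℝ × ℝ))) : (Rpoly T).totalDegree ≤ T.card := by
  refine le_trans (MvPolynomial.totalDegree_finset_prod _ _) ?_
  calc ∑ L ∈ T, (lform (lco L).1 (lco L).2.1 (lco L).2.2).totalDegree
      ≤ ∑ _L ∈ T, 1 := Finset.sum_le_sum fun L _ => totalDegree_lform_le _ _ _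
    _ = T.card := by simp

lemma totalDegree_Rpoly {T : Finset (Set (ℝ × ℝ))} {t : ℝ}
    (ht : ∀ L ∈ T, (lco L).1 + (lco L).2.1 * t ≠ 0) :
    (Rpoly T).totalDegree = T.card := by
  refine le_antisymm (totalDegree_Rpoly_le T) ?_
  calc T.card = (phi t (Rpoly T)).natDegree := (natDegree_phi_Rpoly ht).symm
    _ ≤ (Rpoly T).totalDegree := natDegree_phi_le t _

lemma pev_Rpoly_eq_zero {T : Finset (Set (ℝ × ℝ))} (h : ∀ L ∈ T, IsLine L)
    {L' : Set (ℝ × ℝ)} (hL' : L' ∈ T) {r : ℝ × ℝ} (hr : r ∈ L') : pev (Rpoly T) r = 0 := by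
  rw [Rpoly, pev_prod]
  refine Finset.prod_eq_zero hL' ?_
  rw [pev_lform]
  have h2 := (lco_spec (h L' hL')).2
  rw [h2] at hr
  exact hr

lemma exists_good_t (T : Finset (Set (ℝ × ℝ))) :
    ∃ t : ℝ, t ≠ 0 ∧ ∀ L ∈ T, IsLine L → (lco L).1 + (lco L).2.1 * t ≠ 0 := by
  obtain ⟨t, ht⟩ := Infinite.exists_notMem_finset
    (insert (0:ℝ) (T.image fun L => -(lco L).1 / (lco L).2.1))
  refine ⟨t, fun h0 => ht (by simp [h0]), fun L hL hIs => ?_⟩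
  rcases eq_or_ne (lco L).2.1 0 with hb | hb
  · have ha : (lco L).1 ≠ 0 := by
      intro ha
      exact (lco_spec hIs).1 (by rw [ha, hb])
    simpa [hb] using ha
  · intro he
    apply ht
    refine Finset.mem_insert_of_mem (Finset.mem_image.2 ⟨L, hL, ?_⟩)
    field_simp
    linarith


-- extraction of m and p ------------------------------------------------------

lemma exists_q_numThrough (A : Finset (Set (ℝ × ℝ))) :
    ∃ q : ℝ × ℝ, numThrough A q = mArr A := by
  classical
  have hbdd : BddAbove (Set.range (numThrough A)) := by
    refine ⟨A.card, ?_⟩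
    rintro x ⟨q, rfl⟩
    rw [numThrough]
    exact Finset.card_filter_le _ _
  have := Nat.sSup_mem (Set.range_nonempty (numThrough A)) hbdd
  exact this

lemma exists_S_pArr (A : Finset (Set (ℝ × ℝ))) :
    ∃ S : Finset (Set (ℝ × ℝ)), S ⊆ A ∧ (∀ L ∈ S, ∀ L' ∈ S, ParLines L L') ∧ S.card = pArr A := by
  have hbdd : BddAbove {k : ℕ | ∃ S : Finset (Set (ℝ × ℝ)), S ⊆ A ∧
      (∀ L ∈ S, ∀ L' ∈ S, ParLines L L') ∧ S.card = k} := by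
    refine ⟨A.card, ?_⟩
    rintro k ⟨S, hS, _, rfl⟩
    exact Finset.card_le_card hS
  have hnon : {k : ℕ | ∃ S : Finset (Set (ℝ × ℝ)), S ⊆ A ∧
      (∀ L ∈ S, ∀ L' ∈ S, ParLines L L') ∧ S.card = k}.Nonempty :=
    ⟨0, ∅, by simp⟩
  exact Nat.sSup_mem hnon hbdd

lemma pArr_pos {A : Finset (Set (ℝ × ℝ))} (hne : A.Nonempty) : 1 ≤ pArr A := by
  obtain ⟨L, hL⟩ := hne
  have hbdd : BddAbove {k : ℕ | ∃ S : Finset (Set (ℝ × ℝ)), S ⊆ A ∧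
      (∀ L ∈ S, ∀ L' ∈ S, ParLines L L') ∧ S.card = k} := by
    refine ⟨A.card, ?_⟩
    rintro k ⟨S, hS, _, rfl⟩
    exact Finset.card_le_card hS
  refine le_csSup hbdd ⟨{L}, by simpa using hL, ?_, Finset.card_singleton L⟩
  intro L1 h1 L2 h2
  simp only [Finset.mem_singleton] at h1 h2
  subst h1; subst h2
  exact Or.inl rfl

lemma totalDegree_mul_C_le (R : MvPolynomial (Fin 2) ℝ) (b : ℝ) :
    (R * C b).totalDegree ≤ R.totalDegree := by
  refine le_trans (MvPolynomial.totalDegree_mul _ _) ?_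
  simp

lemma totalDegree_mul_C {b : ℝ} (hb : b ≠ 0) (R : MvPolynomial (Fin 2) ℝ) :
    (R * C b).totalDegree = R.totalDegree := by
  refine le_antisymm (totalDegree_mul_C_le R b) ?_
  have h := totalDegree_mul_C_le (R * C b) b⁻¹
  rwa [mul_assoc, ← MvPolynomial.C_mul, mul_inv_cancel₀ hb, MvPolynomial.C_1, mul_one] at h

@[simp] lemma pev_X0_sub_C (x : ℝ) (q : ℝ × ℝ) : pev (X 0 - C x) q = q.1 - x := by
  simp [pev]

@[simp] lemma pev_X1_sub_C (x : ℝ) (q : ℝ × ℝ) : pev (X 1 - C x) q = q.2 - x := by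
  simp [pev]

/-- **Corollary.** For a nonempty line arrangement `A` with `n` lines and
`ν_f(A) = min (n - m(A) + 1) (n - p(A))`, there is a nonzero polynomial vector
field of degree `ν_f(A)` fixing every line of `A` whose set of invariant lines is
infinite (so `D^∞(A) ≠ ∅` in degree `ν_f(A)` and beyond). -/
theorem exists_infinite_type_at_nu_f
    (A : Finset (Set (ℝ × ℝ))) (hA : ∀ L ∈ A, IsLine L) (hne : A.Nonempty) :
    ∃ P Q : MvPolynomial (Fin 2) ℝ, (P ≠ 0 ∨ Q ≠ 0) ∧
      max P.totalDegree Q.totalDegree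
        = min (A.card - mArr A + 1) (A.card - pArr A) ∧
      (∀ L ∈ A, InvLine P Q L) ∧
      {M : Set (ℝ × ℝ) | InvLine P Q M}.Infinite := by
  classical
  by_cases hcase : A.card - pArr A ≤ A.card - mArr A + 1
  · -- parallel construction
    have hmin : min (A.card - mArr A + 1) (A.card - pArr A) = A.card - pArr A :=
      min_eq_right hcase
    obtain ⟨Sp, hSpA, hSpPar, hSpcard⟩ := exists_S_pArr A
    have hSpne : Sp.Nonempty := Finset.card_pos.mp (by rw [hSpcard]; exact pArr_pos hne)
    obtain ⟨L0, hL0⟩ := hSpne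
    have hspec0 := lco_spec (hA L0 (hSpA hL0))
    set a := (lco L0).1 with ha_def
    set b := (lco L0).2.1 with hb_def
    set T := A \ Sp with hT
    have hTsub : ∀ L ∈ T, IsLine L := fun L hL => hA L (Finset.mem_sdiff.mp hL).1
    obtain ⟨t, ht0, htg⟩ := exists_good_t T
    have htT : ∀ L ∈ T, (lco L).1 + (lco L).2.1 * t ≠ 0 := fun L hL => htg L hL (hTsub L hL)
    set R := Rpoly T with hRdef
    have hR0 : R ≠ 0 := Rpoly_ne_zero hTsub
    have hRdeg : R.totalDegree = T.card := totalDegree_Rpoly htT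
    have hTcard : T.card = A.card - pArr A := by rw [hT, Finset.card_sdiff_of_subset hSpA, hSpcard]
    have hab : a ≠ 0 ∨ b ≠ 0 := by
      by_contra hc
      push_neg at hc
      exact hspec0.1 (by rw [hc.1, hc.2])
    refine ⟨R * C b, R * C (-a), ?_, ?_, ?_, ?_⟩
    · rcases hab with ha | hb
      · right
        exact mul_ne_zero hR0 (by simpa using neg_ne_zero.mpr ha)
      · left
        exact mul_ne_zero hR0 (by simpa using hb)
    · rw [hmin, ← hTcard, ← hRdeg]
      rcases hab with ha | hb
      · rw [max_eq_right]
        · exact totalDegree_mul_C (neg_ne_zero.mpr ha) R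
        · rw [totalDegree_mul_C (neg_ne_zero.mpr ha) R]
          exact totalDegree_mul_C_le R b
      · rw [max_eq_left]
        · exact totalDegree_mul_C hb R
        · rw [totalDegree_mul_C hb R]
          exact totalDegree_mul_C_le R (-a)
    · intro L hL
      have hsL := lco_spec (hA L hL)
      refine ⟨(lco L).1, (lco L).2.1, (lco L).2.2, hsL.1, hsL.2, ?_⟩
      intro r hr
      by_cases hLS : L ∈ Sp
      · have hpar := hSpPar L hLS L0 hL0
        rw [hsL.2, hspec0.2] at hpar
        have hdet : (lco L).1 * b = a * (lco L).2.1 := parallel_det hsL.1 hspec0.1 hpar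
        simp only [pev_mul, pev_C]
        linear_combination (pev R r) * hdet
      · have hLT : L ∈ T := Finset.mem_sdiff.mpr ⟨hL, hLS⟩
        have h0 : pev R r = 0 := pev_Rpoly_eq_zero hTsub hLT hr
        simp only [pev_mul, pev_C, h0]
        ring
    · refine Set.infinite_of_injective_forall_mem
        (f := fun c : ℝ => lineSet a b c) ?_ ?_
      · intro c c' hcc
        exact lineSet_inj hspec0.1 hcc
      · intro c
        refine ⟨a, b, c, hspec0.1, rfl, ?_⟩
        intro r _
        simp only [pev_mul, pev_C]
        ring
  · -- pencil construction
    push_neg at hcase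
    have hmin : min (A.card - mArr A + 1) (A.card - pArr A) = A.card - mArr A + 1 :=
      min_eq_left (le_of_lt hcase)
    obtain ⟨q, hq⟩ := exists_q_numThrough A
    set S := A.filter (fun L => q ∈ L) with hSdef
    have hSsub : S ⊆ A := Finset.filter_subset _ _
    have hScard : S.card = mArr A := by rw [← hq]; rfl
    set T := A \ S with hT
    have hTsub : ∀ L ∈ T, IsLine L := fun L hL => hA L (Finset.mem_sdiff.mp hL).1
    obtain ⟨t, ht0, htg⟩ := exists_good_t T
    have htT : ∀ L ∈ T, (lco L).1 + (lco L).2.1 * t ≠ 0 := fun L hL => htg L hL (hTsub L hL)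
    set R := Rpoly T with hRdef
    have hR0 : R ≠ 0 := Rpoly_ne_zero hTsub
    have hRdeg : R.totalDegree = T.card := totalDegree_Rpoly htT
    have hphiR : (phi t R).natDegree = T.card := natDegree_phi_Rpoly htT
    have hphiR0 : phi t R ≠ 0 := phi_Rpoly_ne_zero htT
    have hTcard : T.card = A.card - mArr A := by rw [hT, Finset.card_sdiff_of_subset hSsub, hScard]
    have hphiP : phi t (X 0 - C q.1) = Polynomial.X - Polynomial.C q.1 := by
      simp [phi]
    have hphiQ : phi t (X 1 - C q.2) =
        Polynomial.C t * Polynomial.X + Polynomial.C (-q.2) := by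
      simp [phi]
      ring
    have hP1 : (X 0 - C q.1 : MvPolynomial (Fin 2) ℝ).totalDegree ≤ 1 := by
      rw [sub_eq_add_neg, ← MvPolynomial.C_neg]
      exact le_trans (MvPolynomial.totalDegree_add _ _)
        (max_le (by simp [MvPolynomial.totalDegree_X]) (by simp))
    have hQ1 : (X 1 - C q.2 : MvPolynomial (Fin 2) ℝ).totalDegree ≤ 1 := by
      rw [sub_eq_add_neg, ← MvPolynomial.C_neg]
      exact le_trans (MvPolynomial.totalDegree_add _ _)
        (max_le (by simp [MvPolynomial.totalDegree_X]) (by simp))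
    have hPdeg : (R * (X 0 - C q.1)).totalDegree = T.card + 1 := by
      refine le_antisymm (le_trans (MvPolynomial.totalDegree_mul _ _)
        (add_le_add (le_of_eq hRdeg) hP1)) ?_
      calc T.card + 1 = (phi t (R * (X 0 - C q.1))).natDegree := by
            rw [map_mul, hphiP,
              Polynomial.natDegree_mul hphiR0 (Polynomial.X_sub_C_ne_zero q.1),
              hphiR, Polynomial.natDegree_X_sub_C]
        _ ≤ _ := natDegree_phi_le t _
    have hQdeg : (R * (X 1 - C q.2)).totalDegree = T.card + 1 := by
      refine le_antisymm (le_trans (MvPolynomial.totalDegree_mul _ _)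
        (add_le_add (le_of_eq hRdeg) hQ1)) ?_
      calc T.card + 1 = (phi t (R * (X 1 - C q.2))).natDegree := by
            rw [map_mul, hphiQ,
              Polynomial.natDegree_mul hphiR0 (linear_ne_zero' _ ht0),
              hphiR, Polynomial.natDegree_linear ht0]
        _ ≤ _ := natDegree_phi_le t _
    refine ⟨R * (X 0 - C q.1), R * (X 1 - C q.2), ?_, ?_, ?_, ?_⟩
    · left
      refine mul_ne_zero hR0 ?_
      intro h
      apply Polynomial.X_sub_C_ne_zero q.1 (R := ℝ)
      rw [← hphiP, h, map_zero]
    · rw [hmin, ← hTcard, hPdeg, hQdeg, max_self]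
    · intro L hL
      have hsL := lco_spec (hA L hL)
      refine ⟨(lco L).1, (lco L).2.1, (lco L).2.2, hsL.1, hsL.2, ?_⟩
      intro r hr
      by_cases hLS : L ∈ S
      · have hqL : q ∈ L := (Finset.mem_filter.mp hLS).2
        have hq' : (lco L).1 * q.1 + (lco L).2.1 * q.2 + (lco L).2.2 = 0 := by
          have := hsL.2 ▸ hqL
          exact this
        have hr' : (lco L).1 * r.1 + (lco L).2.1 * r.2 + (lco L).2.2 = 0 := by
          have := hsL.2 ▸ hr
          exact this
        simp only [pev_mul, pev_X0_sub_C, pev_X1_sub_C]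
        linear_combination (pev R r) * hr' - (pev R r) * hq'
      · have hLT : L ∈ T := Finset.mem_sdiff.mpr ⟨hL, hLS⟩
        have h0 : pev R r = 0 := pev_Rpoly_eq_zero hTsub hLT hr
        simp [h0]
    · refine Set.infinite_of_injective_forall_mem
        (f := fun s : ℝ => lineSet 1 s (-(q.1 + s * q.2))) ?_ ?_
      · intro t1 t2 h
        have hm1 : (q.1 + t1, q.2 - 1) ∈ lineSet 1 t1 (-(q.1 + t1 * q.2)) := by
          simp only [lineSet, Set.mem_setOf_eq]
          ring
        have h2 : lineSet 1 t1 (-(q.1 + t1 * q.2)) = lineSet 1 t2 (-(q.1 + t2 * q.2)) := h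
        rw [h2] at hm1
        simp only [lineSet, Set.mem_setOf_eq] at hm1
        nlinarith [hm1]
      · intro s
        refine ⟨1, s, -(q.1 + s * q.2), by simp, rfl, ?_⟩
        intro r hr
        simp only [lineSet, Set.mem_setOf_eq] at hr
        simp only [pev_mul, pev_X0_sub_C, pev_X1_sub_C]
        linear_combination (pev R r) * hr
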